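/- arXiv:math/0602595 — 6 statements merged into one kernel-verified Lean document; each statement's English description precedes it below -/
import Mathlib

section
/- For the standard unit sphere, the period integral equals $2\pi$: for every $x \in (0, \pi/2)$, $2\int_x^{\pi - x} \frac{\sin x}{\sin u \sqrt{\sin^2 u - \sin^2 x}}\, du = 2\pi$. -/
open Real

open Set MeasureTheory intervalIntegral in
private lemma aux_id (u x : ℝ) :
    Real.sin u ^ 2 - Real.sin x ^ 2 = Real.sin (u + x) * Real.sin (u - x) := by
  have h1 := Real.sin_sq_add_cos_sq u
  have h2 := Real.sin_sq_add_cos_sq x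
  rw [Real.sin_add, Real.sin_sub]; nlinarith

private lemma aux_sin_lt {x u : ℝ} (hx0 : 0 < x) (hu : u ∈ Set.Ioo x (π - x)) :
    Real.sin x < Real.sin u := by
  rcases le_or_gt u (π / 2) with h | h
  · exact Real.strictMonoOn_sin ⟨by linarith [Real.pi_pos], by linarith [hu.1]⟩
      ⟨by linarith [hu.1, Real.pi_pos], h⟩ hu.1
  · rw [← Real.sin_pi_sub u]
    exact Real.strictMonoOn_sin ⟨by linarith [Real.pi_pos], by linarith [hu.2]⟩
      ⟨by linarith [hu.2], by linarith⟩ (by linarith [hu.2])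

open Set MeasureTheory intervalIntegral in
private lemma aux_half (x : ℝ) (hx0 : 0 < x) (hx2 : x < π / 2) :
    IntervalIntegrable
      (fun u => Real.sin x / (Real.sin u * Real.sqrt (Real.sin u ^ 2 - Real.sin x ^ 2)))
      volume x (π / 2) := by
  have hpi := Real.pi_pos
  set m : ℝ := min (Real.sin (2 * x)) (Real.sin (x + π / 2)) with hm_def
  have hm : 0 < m := lt_min (Real.sin_pos_of_pos_of_lt_pi (by linarith) (by linarith))
    (Real.sin_pos_of_pos_of_lt_pi (by linarith) (by linarith))
  set K : ℝ := (Real.sqrt (2 * m / π))⁻¹ with hK_def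
  have hKpos : 0 < Real.sqrt (2 * m / π) := Real.sqrt_pos.2 (by positivity)
  have hg : IntervalIntegrable (fun u => K * (u - x) ^ (-(1/2) : ℝ)) volume x (π / 2) := by
    have h0 : IntervalIntegrable (fun u : ℝ => u ^ (-(1/2) : ℝ)) volume 0 (π / 2 - x) :=
      intervalIntegrable_rpow' (by norm_num)
    have h1 := (h0.comp_sub_right x).const_mul K
    simpa using h1
  apply hg.mono_fun'
  · apply Measurable.aestronglyMeasurable
    exact (measurable_const.div ((Real.measurable_sin).mul
      (((Real.measurable_sin.pow_const 2).sub measurable_const).sqrt)))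
  · have hle : x ≤ π / 2 := hx2.le
    rw [uIoc_of_le hle]
    filter_upwards [ae_restrict_mem measurableSet_Ioc] with u hu
    obtain ⟨hux, hu2⟩ := hu
    have hsinx : 0 < Real.sin x := Real.sin_pos_of_pos_of_lt_pi hx0 (by linarith)
    have hsinu : Real.sin x ≤ Real.sin u :=
      (Real.strictMonoOn_sin ⟨by linarith, by linarith⟩ ⟨by linarith, hu2⟩ hux).le
    have hmem : u + x ∈ segment ℝ (2 * x) (x + π / 2) := by
      rw [segment_eq_Icc (by linarith)]
      exact ⟨by linarith, by linarith⟩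
    have hm1 : m ≤ Real.sin (u + x) := by
      have := strictConcaveOn_sin_Icc.concaveOn.ge_on_segment
        (x := 2 * x) (y := x + π / 2) ⟨by linarith, by linarith⟩ ⟨by linarith, by linarith⟩ hmem
      simpa [hm_def] using this
    have hsub : 2 / π * (u - x) ≤ Real.sin (u - x) :=
      Real.mul_le_sin (by linarith) (by linarith)
    have key : 2 * m / π * (u - x) ≤ Real.sin u ^ 2 - Real.sin x ^ 2 := by
      rw [aux_id]
      calc 2 * m / π * (u - x) = m * (2 / π * (u - x)) := by ring
        _ ≤ Real.sin (u + x) * Real.sin (u - x) :=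
          mul_le_mul hm1 hsub (mul_nonneg (by positivity) (by linarith)) (by linarith)
    have hpos : 0 < Real.sin u ^ 2 - Real.sin x ^ 2 :=
      lt_of_lt_of_le (mul_pos (by positivity) (by linarith)) key
    have hS : Real.sqrt (2 * m / π) * Real.sqrt (u - x) ≤
        Real.sqrt (Real.sin u ^ 2 - Real.sin x ^ 2) := by
      rw [← Real.sqrt_mul (by positivity)]
      exact Real.sqrt_le_sqrt key
    have hsx : 0 < Real.sqrt (u - x) := Real.sqrt_pos.2 (by linarith)
    have hden : 0 < Real.sin u * Real.sqrt (Real.sin u ^ 2 - Real.sin x ^ 2) := by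
      have := Real.sqrt_pos.2 hpos
      nlinarith
    have hfnn : 0 ≤ Real.sin x / (Real.sin u * Real.sqrt (Real.sin u ^ 2 - Real.sin x ^ 2)) :=
      div_nonneg hsinx.le hden.le
    simp only [Real.norm_eq_abs, abs_of_nonneg hfnn]
    calc Real.sin x / (Real.sin u * Real.sqrt (Real.sin u ^ 2 - Real.sin x ^ 2))
        ≤ Real.sin x / (Real.sin x * (Real.sqrt (2 * m / π) * Real.sqrt (u - x))) := by
          apply div_le_div_of_nonneg_left hsinx.le (by positivity)
          exact mul_le_mul hsinu hS (by positivity) (by linarith)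
      _ = K * (u - x) ^ (-(1/2) : ℝ) := by
          rw [Real.rpow_neg (by linarith), ← Real.sqrt_eq_rpow]
          rw [← div_div, div_self hsinx.ne', one_div, mul_inv, hK_def]

open Set MeasureTheory intervalIntegral in
private lemma aux_int (x : ℝ) (hx0 : 0 < x) (hx2 : x < π / 2) :
    IntervalIntegrable
      (fun u => Real.sin x / (Real.sin u * Real.sqrt (Real.sin u ^ 2 - Real.sin x ^ 2)))
      volume x (π - x) := by
  have h1 := aux_half x hx0 hx2
  refine h1.trans ?_
  have h3 := h1.comp_sub_left π
  have h4 : (fun u => Real.sin x /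
      (Real.sin (π - u) * Real.sqrt (Real.sin (π - u) ^ 2 - Real.sin x ^ 2))) =
      (fun u => Real.sin x / (Real.sin u * Real.sqrt (Real.sin u ^ 2 - Real.sin x ^ 2))) := by
    funext u; rw [Real.sin_pi_sub]
  rw [h4] at h3
  have h5 : π - π / 2 = π / 2 := by ring
  rw [h5] at h3
  exact h3.symm

open Set MeasureTheory intervalIntegral in
theorem stmt_1 (x : ℝ) (hx : x ∈ Set.Ioo 0 (π / 2)) :
    2 * ∫ u in x..(π - x),
      Real.sin x / (Real.sin u * Real.sqrt (Real.sin u ^ 2 - Real.sin x ^ 2)) = 2 * π := by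
  obtain ⟨hx0, hx2⟩ := hx
  have hint := aux_int x hx0 hx2
  have hpi := Real.pi_pos
  have hsinx : 0 < Real.sin x := Real.sin_pos_of_pos_of_lt_pi hx0 (by linarith)
  have hcosx : 0 < Real.cos x := Real.cos_pos_of_mem_Ioo ⟨by linarith, hx2⟩
  set F : ℝ → ℝ := fun u => -Real.arcsin (Real.sin x * Real.cos u / (Real.cos x * Real.sin u))
    with hF_def
  have hcont : ContinuousOn F (Icc x (π - x)) := by
    apply ContinuousOn.neg
    apply Real.continuous_arcsin.comp_continuousOn
    apply ContinuousOn.div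
    · exact (continuous_const.mul Real.continuous_cos).continuousOn
    · exact (continuous_const.mul Real.continuous_sin).continuousOn
    · intro u hu
      have hs : 0 < Real.sin u :=
        Real.sin_pos_of_pos_of_lt_pi (lt_of_lt_of_le hx0 hu.1) (lt_of_le_of_lt hu.2 (by linarith))
      exact (mul_pos hcosx hs).ne'
  have hderiv : ∀ u ∈ Ioo x (π - x),
      HasDerivAt F (Real.sin x / (Real.sin u * Real.sqrt (Real.sin u ^ 2 - Real.sin x ^ 2))) u := by
    intro u hu
    have hsinu : 0 < Real.sin u :=
      Real.sin_pos_of_pos_of_lt_pi (lt_trans hx0 hu.1) (by linarith [hu.2])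
    have hlt : Real.sin x < Real.sin u := aux_sin_lt hx0 hu
    have hne : Real.cos x * Real.sin u ≠ 0 := (mul_pos hcosx hsinu).ne'
    have hgd : HasDerivAt (fun u => Real.sin x * Real.cos u / (Real.cos x * Real.sin u))
        (-(Real.sin x / (Real.cos x * Real.sin u ^ 2))) u := by
      have h1 : HasDerivAt (fun u => Real.sin x * Real.cos u) (Real.sin x * (-Real.sin u)) u :=
        (Real.hasDerivAt_cos u).const_mul _
      have h2 : HasDerivAt (fun u => Real.cos x * Real.sin u) (Real.cos x * Real.cos u) u :=
        (Real.hasDerivAt_sin u).const_mul _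
      have h3 := h1.div h2 hne
      refine h3.congr_deriv ?_
      have hpu := Real.sin_sq_add_cos_sq u
      have hnum : Real.sin x * -Real.sin u * (Real.cos x * Real.sin u) -
          Real.sin x * Real.cos u * (Real.cos x * Real.cos u) = -(Real.sin x * Real.cos x) := by
        linear_combination (-(Real.sin x * Real.cos x)) * hpu
      rw [hnum, mul_pow]
      field_simp [hcosx.ne', hsinu.ne']
    have hg2 : (Real.sin x * Real.cos u / (Real.cos x * Real.sin u)) ^ 2 < 1 := by
      rw [div_pow, div_lt_one (by positivity)]
      have hpu := Real.sin_sq_add_cos_sq u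
      have hpx := Real.sin_sq_add_cos_sq x
      nlinarith [hlt, hsinx, hsinu]
    have h1 : Real.sin x * Real.cos u / (Real.cos x * Real.sin u) ≠ -1 := by
      intro h; rw [h] at hg2; norm_num at hg2
    have h2 : Real.sin x * Real.cos u / (Real.cos x * Real.sin u) ≠ 1 := by
      intro h; rw [h] at hg2; norm_num at hg2
    have harc := ((Real.hasDerivAt_arcsin h1 h2).comp u hgd).neg
    refine harc.congr_deriv ?_
    have hA : 1 - (Real.sin x * Real.cos u / (Real.cos x * Real.sin u)) ^ 2 =
        (Real.sin u ^ 2 - Real.sin x ^ 2) / (Real.cos x * Real.sin u) ^ 2 := by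
      rw [div_pow, one_sub_div (pow_ne_zero 2 hne)]
      congr 1
      linear_combination Real.sin u ^ 2 * Real.sin_sq_add_cos_sq x -
        Real.sin x ^ 2 * Real.sin_sq_add_cos_sq u
    have hposd : 0 < Real.sin u ^ 2 - Real.sin x ^ 2 := by nlinarith
    rw [hA, Real.sqrt_div hposd.le, Real.sqrt_sq (by positivity)]
    have hS : 0 < Real.sqrt (Real.sin u ^ 2 - Real.sin x ^ 2) := Real.sqrt_pos.2 hposd
    field_simp
  rw [intervalIntegral.integral_eq_sub_of_hasDeriv_right_of_le (by linarith) hcont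
    (fun u hu => (hderiv u hu).hasDerivWithinAt) hint]
  have hFx : F x = -(π / 2) := by
    have : Real.sin x * Real.cos x / (Real.cos x * Real.sin x) = 1 := by
      rw [mul_comm (Real.cos x)]; exact div_self (by positivity)
    rw [hF_def]; simp only [this, Real.arcsin_one]
  have hFpx : F (π - x) = π / 2 := by
    have : Real.sin x * Real.cos (π - x) / (Real.cos x * Real.sin (π - x)) = -1 := by
      rw [Real.cos_pi_sub, Real.sin_pi_sub]
      field_simp
    rw [hF_def]; simp only [this, Real.arcsin_neg_one]; ring
  rw [hFx, hFpx]; ring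
end

section
/- Let $\tilde f : [-1,1] \to \mathbb{R}$ be continuous with $f(u) = \tilde f(\cos u)$, and suppose $F(x) = \int_x^{\pi-x} \frac{f(u)\sin x}{\sin u \sqrt{\sin^2 u - \sin^2 x}}\,du = 0$ for all $x \in (0,\pi/2)$. Then $\tilde f$ is an odd function on $[-1,1]$. -/
open Real MeasureTheory intervalIntegral Set

noncomputable def W (n : ℕ) : ℝ := ∫ θ in (0:ℝ)..(π/2), Real.sin θ ^ n

lemma W_zero : W 0 = π / 2 := by simp [W]

lemma W_one : W 1 = 1 := by simp [W, integral_sin]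

lemma W_rec (n : ℕ) : W (n + 2) = (n + 1) / (n + 2) * W n := by
  have := integral_sin_pow (a := 0) (b := π/2) n
  simpa [W, Real.cos_pi_div_two] using this

lemma W_mul (n : ℕ) : W n * W (n + 1) * (n + 1) = π / 2 := by
  induction n with
  | zero => simp [W_zero, W_one]
  | succ m ih =>
    have h := W_rec m
    have hm2 : (m:ℝ) + 2 ≠ 0 := by positivity
    push_cast
    push_cast at ih
    calc W (m+1) * W (m+2) * ((m:ℝ) + 1 + 1)
        = W (m+1) * (((m:ℝ)+1)/((m:ℝ)+2) * W m) * ((m:ℝ)+2) := by rw [h]; push_cast; ring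
      _ = W m * W (m+1) * ((m:ℝ)+1) := by field_simp
      _ = π/2 := ih

lemma poly_id (b : ℝ) (p : Polynomial ℝ) :
    (∫ φ in (0:ℝ)..(π/2), (∫ θ in (0:ℝ)..(π/2),
        Polynomial.eval (b * Real.sin φ * Real.sin θ) p) * Real.sin φ)
      = π/2 * ∫ t in (0:ℝ)..1, Polynomial.eval (b * t) p := by
  set n := p.natDegree + 1 with hn
  have inner : ∀ φ : ℝ, (∫ θ in (0:ℝ)..(π/2), Polynomial.eval (b * Real.sin φ * Real.sin θ) p)
      = ∑ i ∈ Finset.range n, p.coeff i * (b * Real.sin φ) ^ i * W i := by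
    intro φ
    have : ∀ θ : ℝ, Polynomial.eval (b * Real.sin φ * Real.sin θ) p
        = ∑ i ∈ Finset.range n, p.coeff i * (b * Real.sin φ) ^ i * Real.sin θ ^ i := by
      intro θ
      rw [Polynomial.eval_eq_sum_range]
      exact Finset.sum_congr rfl fun i _ => by rw [mul_pow]; ring
    simp_rw [this]
    rw [intervalIntegral.integral_finset_sum]
    · exact Finset.sum_congr rfl fun i _ => by
        rw [intervalIntegral.integral_const_mul]; rfl
    · intro i _
      exact ((by fun_prop : Continuous fun θ : ℝ =>
        p.coeff i * (b * Real.sin φ) ^ i * Real.sin θ ^ i).intervalIntegrable _ _)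
  simp_rw [inner, Finset.sum_mul]
  rw [intervalIntegral.integral_finset_sum (fun i _ =>
    ((by fun_prop : Continuous fun φ : ℝ =>
      p.coeff i * (b * Real.sin φ) ^ i * W i * Real.sin φ).intervalIntegrable _ _))]
  have lhs_term : ∀ i ∈ Finset.range n,
      (∫ φ in (0:ℝ)..(π/2), p.coeff i * (b * Real.sin φ) ^ i * W i * Real.sin φ)
        = p.coeff i * b ^ i * (W i * W (i+1)) := by
    intro i _
    have : ∀ φ : ℝ, p.coeff i * (b * Real.sin φ) ^ i * W i * Real.sin φ
        = (p.coeff i * b ^ i * W i) * Real.sin φ ^ (i+1) := fun φ => by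
      rw [mul_pow, pow_succ]; ring
    simp_rw [this]
    rw [intervalIntegral.integral_const_mul]
    show (p.coeff i * b ^ i * W i) * W (i+1) = _
    ring
  rw [Finset.sum_congr rfl lhs_term]
  have rhs : (∫ t in (0:ℝ)..1, Polynomial.eval (b * t) p)
      = ∑ i ∈ Finset.range n, p.coeff i * b ^ i * (1 / (i+1)) := by
    have : ∀ t : ℝ, Polynomial.eval (b * t) p
        = ∑ i ∈ Finset.range n, p.coeff i * b ^ i * t ^ i := by
      intro t
      rw [Polynomial.eval_eq_sum_range]
      exact Finset.sum_congr rfl fun i _ => by rw [mul_pow]; ring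
    simp_rw [this]
    rw [intervalIntegral.integral_finset_sum (fun i _ =>
      ((by fun_prop : Continuous fun t : ℝ =>
        p.coeff i * b ^ i * t ^ i).intervalIntegrable _ _))]
    refine Finset.sum_congr rfl fun i _ => ?_
    rw [intervalIntegral.integral_const_mul, integral_pow]
    simp
  rw [rhs, Finset.mul_sum]
  refine Finset.sum_congr rfl fun i _ => ?_
  have hi : ((i:ℝ) + 1) ≠ 0 := by positivity
  have hw : W i * W (i+1) = π / 2 / ((i:ℝ)+1) := by
    rw [eq_div_iff hi]; exact_mod_cast W_mul i
  rw [hw]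
  field_simp


lemma step_B (ft' : ℝ → ℝ) (hft' : Continuous ft') {x : ℝ} (hx : x ∈ Set.Ioo 0 (π/2))
    (h0 : ∫ u in x..(π-x),
      ft' (Real.cos u) * Real.sin x /
        (Real.sin u * Real.sqrt (Real.sin u ^ 2 - Real.sin x ^ 2)) = 0) :
    ∫ θ in (0:ℝ)..(π/2),
      (ft' (Real.cos x * Real.sin θ) + ft' (-(Real.cos x * Real.sin θ))) /
        (1 - (Real.cos x * Real.sin θ)^2) = 0 := by
  obtain ⟨hx0, hx2⟩ := hx
  set a := Real.cos x with ha
  have hpi := Real.pi_pos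
  have ha0 : 0 < a := Real.cos_pos_of_mem_Ioo ⟨by linarith, hx2⟩
  have ha1 : a < 1 := by
    have := Real.cos_lt_cos_of_nonneg_of_le_pi le_rfl (by linarith) hx0
    simpa using this
  have hsx : 0 < Real.sin x := Real.sin_pos_of_pos_of_lt_pi hx0 (by linarith)
  have hbnd : ∀ θ : ℝ, -a ≤ a * Real.sin θ ∧ a * Real.sin θ ≤ a := by
    intro θ
    constructor <;> nlinarith [Real.neg_one_le_sin θ, Real.sin_le_one θ]
  have hne1 : ∀ θ : ℝ, a * Real.sin θ ≠ 1 := fun θ h => by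
    have := (hbnd θ).2; rw [h] at this; linarith
  have hne1' : ∀ θ : ℝ, a * Real.sin θ ≠ -1 := fun θ h => by
    have := (hbnd θ).1; rw [h] at this; linarith
  set s : Set ℝ := Set.Ioo (-(π/2)) (π/2) with hs
  set φmap : ℝ → ℝ := fun θ => Real.arccos (a * Real.sin θ) with hφ
  set D : ℝ → ℝ := fun θ =>
    -(1 / Real.sqrt (1 - (a * Real.sin θ)^2)) * (a * Real.cos θ) with hD
  -- strict bounds on sin θ for θ ∈ s
  have hsinmem : ∀ θ ∈ s, Real.sin θ ∈ Set.Ioo (-1 : ℝ) 1 := by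
    intro θ hθ
    constructor
    · have := Real.strictMonoOn_sin (a := -(π/2)) (b := θ)
        ⟨le_rfl, by linarith⟩ ⟨hθ.1.le, hθ.2.le⟩ hθ.1
      simpa using this
    · have := Real.strictMonoOn_sin (a := θ) (b := π/2)
        ⟨hθ.1.le, hθ.2.le⟩ ⟨by linarith, le_rfl⟩ hθ.2
      simpa using this
  -- image
  have himg : φmap '' s = Set.Ioo x (π - x) := by
    apply Set.Subset.antisymm
    · rintro - ⟨θ, hθ, rfl⟩
      have hmem := hsinmem θ hθ
      have h1 : -a < a * Real.sin θ := by nlinarith [hmem.1]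
      have h2 : a * Real.sin θ < a := by nlinarith [hmem.2]
      have hax : Real.arccos a = x := by rw [ha]; exact Real.arccos_cos hx0.le (by linarith)
      constructor
      · rw [← hax]
        exact Real.strictAntiOn_arccos ⟨by linarith [(hbnd θ).1], by linarith [(hbnd θ).2]⟩
          ⟨by linarith, ha1.le⟩ h2
      · have : Real.arccos (-a) = π - x := by rw [Real.arccos_neg, hax]
        rw [← this]
        exact Real.strictAntiOn_arccos ⟨by linarith, by linarith⟩
          ⟨by linarith [(hbnd θ).1], by linarith [(hbnd θ).2]⟩ h1
    · have hcont : ContinuousOn φmap (Set.Icc (-(π/2)) (π/2)) :=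
        (Real.continuous_arccos.comp (continuous_const.mul Real.continuous_sin)).continuousOn
      have hIV := intermediate_value_Ioo' (by linarith : -(π/2) ≤ π/2) hcont
      have e1 : φmap (π/2) = x := by
        simp only [hφ, Real.sin_pi_div_two, mul_one]
        exact Real.arccos_cos hx0.le (by linarith)
      have e2 : φmap (-(π/2)) = π - x := by
        simp only [hφ, Real.sin_neg, Real.sin_pi_div_two, mul_neg, mul_one]
        rw [Real.arccos_neg]
        congr 1
        exact Real.arccos_cos hx0.le (by linarith)
      rw [e1, e2] at hIV
      exact hIV
  -- derivative
  have hderiv : ∀ θ ∈ s, HasDerivWithinAt φmap (D θ) s θ := by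
    intro θ _
    have hsin : HasDerivAt (fun θ : ℝ => a * Real.sin θ) (a * Real.cos θ) θ :=
      (Real.hasDerivAt_sin θ).const_mul a
    exact ((Real.hasDerivAt_arccos (hne1' θ) (hne1 θ)).comp θ hsin).hasDerivWithinAt
  -- injectivity
  have hinj : Set.InjOn φmap s := by
    have : StrictAntiOn φmap s := by
      intro θ1 h1 θ2 h2 h12
      have hs1 := hsinmem θ1 h1
      have hs2 := hsinmem θ2 h2
      have : Real.sin θ1 < Real.sin θ2 :=
        Real.strictMonoOn_sin ⟨h1.1.le, h1.2.le⟩ ⟨h2.1.le, h2.2.le⟩ h12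
      exact Real.strictAntiOn_arccos
        ⟨by linarith [(hbnd θ1).1], by linarith [(hbnd θ1).2]⟩
        ⟨by linarith [(hbnd θ2).1], by linarith [(hbnd θ2).2]⟩ (by nlinarith)
    exact this.injOn
  -- change of variables
  have hms : MeasurableSet s := measurableSet_Ioo
  have hCOV := MeasureTheory.integral_image_eq_integral_abs_deriv_smul hms hderiv hinj
    (fun u => ft' (Real.cos u) * Real.sin x /
        (Real.sin u * Real.sqrt (Real.sin u ^ 2 - Real.sin x ^ 2)))
  rw [himg] at hCOV
  -- the original integral equals the set integral over Ioo x (π - x)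
  have hxle : x ≤ π - x := by linarith
  have h0' : ∫ u in Set.Ioo x (π - x),
      ft' (Real.cos u) * Real.sin x /
        (Real.sin u * Real.sqrt (Real.sin u ^ 2 - Real.sin x ^ 2)) = 0 := by
    rw [← MeasureTheory.integral_Ioc_eq_integral_Ioo, ← intervalIntegral.integral_of_le hxle]
    exact h0
  rw [h0'] at hCOV
  -- simplify the integrand on s
  have hsinx2 : Real.sin x ^ 2 = 1 - a ^ 2 := by
    have := Real.sin_sq_add_cos_sq x; rw [← ha] at this; linarith
  have hintegrand : ∀ θ ∈ s,
      |D θ| • (ft' (Real.cos (φmap θ)) * Real.sin x /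
        (Real.sin (φmap θ) * Real.sqrt (Real.sin (φmap θ) ^ 2 - Real.sin x ^ 2)))
      = Real.sin x * (ft' (a * Real.sin θ) / (1 - (a * Real.sin θ)^2)) := by
    intro θ hθ
    set y := a * Real.sin θ with hy
    have hy1 : -1 ≤ y := by linarith [(hbnd θ).1]
    have hy2 : y ≤ 1 := by linarith [(hbnd θ).2]
    have hylt : y^2 < 1 := by
      have h1 : Real.sin θ ^ 2 ≤ 1 := Real.sin_sq_le_one θ
      have h2 : y^2 = a^2 * Real.sin θ^2 := by rw [hy]; ring
      nlinarith [sq_nonneg a]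
    have hcosθ : 0 < Real.cos θ := Real.cos_pos_of_mem_Ioo hθ
    have hsq : 0 < 1 - y^2 := by linarith
    have hsqrt : 0 < Real.sqrt (1 - y^2) := Real.sqrt_pos.mpr hsq
    have e1 : Real.cos (φmap θ) = y := Real.cos_arccos hy1 hy2
    have e2 : Real.sin (φmap θ) = Real.sqrt (1 - y^2) := Real.sin_arccos y
    have e3 : Real.sin (φmap θ) ^ 2 - Real.sin x ^ 2 = (a * Real.cos θ)^2 := by
      rw [e2, Real.sq_sqrt hsq.le, hsinx2, hy]
      have := Real.sin_sq_add_cos_sq θ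
      ring_nf
      nlinarith [this]
    have e4 : Real.sqrt (Real.sin (φmap θ) ^ 2 - Real.sin x ^ 2) = a * Real.cos θ := by
      rw [e3, Real.sqrt_sq (by positivity)]
    have e5 : |D θ| = (a * Real.cos θ) / Real.sqrt (1 - y^2) := by
      rw [hD]
      rw [abs_mul, abs_neg, abs_div, abs_one, abs_of_pos hsqrt,
        abs_of_pos (by positivity : (0:ℝ) < a * Real.cos θ)]
      ring
    rw [e1, e4, e2, e5, smul_eq_mul]
    set S := Real.sqrt (1 - y^2) with hSdef
    have hss : S * S = 1 - y^2 := Real.mul_self_sqrt hsq.le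
    have hCpos : (0:ℝ) < a * Real.cos θ := by positivity
    rw [div_mul_div_comm, mul_div_assoc']
    rw [div_eq_div_iff (by positivity) (by linarith)]
    linear_combination (-(a * Real.cos θ * ft' y * Real.sin x)) * hss
  rw [MeasureTheory.setIntegral_congr_fun hms hintegrand] at hCOV
  rw [MeasureTheory.integral_const_mul] at hCOV
  have hint0 : ∫ θ in s, ft' (a * Real.sin θ) / (1 - (a * Real.sin θ)^2) = 0 := by
    rcases mul_eq_zero.mp hCOV.symm with h | h
    · exact absurd h hsx.ne'
    · exact h
  -- convert to interval integral and symmetrize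
  have hcont_k : Continuous (fun θ : ℝ => ft' (a * Real.sin θ) / (1 - (a * Real.sin θ)^2)) := by
    apply Continuous.div
    · exact hft'.comp (continuous_const.mul Real.continuous_sin)
    · fun_prop
    · intro θ
      have h1 : Real.sin θ ^ 2 ≤ 1 := Real.sin_sq_le_one θ
      have h2 : (a * Real.sin θ)^2 ≤ a^2 := by
        rw [mul_pow]
        exact mul_le_of_le_one_right (sq_nonneg a) h1
      have ha2 : a^2 < 1 := by
        have := pow_lt_one₀ ha0.le ha1 (two_ne_zero)
        exact this
      have h3 : 0 < 1 - (a * Real.sin θ)^2 := by linarith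
      exact h3.ne'
  set k : ℝ → ℝ := fun θ => ft' (a * Real.sin θ) / (1 - (a * Real.sin θ)^2) with hk
  have hik : ∫ θ in (-(π/2))..(π/2), k θ = 0 := by
    rw [intervalIntegral.integral_of_le (by linarith), MeasureTheory.integral_Ioc_eq_integral_Ioo]
    exact hint0
  have hsplit : (∫ θ in (-(π/2))..(0:ℝ), k θ) + (∫ θ in (0:ℝ)..(π/2), k θ)
      = ∫ θ in (-(π/2))..(π/2), k θ :=
    intervalIntegral.integral_add_adjacent_intervals
      (hcont_k.intervalIntegrable _ _) (hcont_k.intervalIntegrable _ _)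
  have hneg : (∫ θ in (-(π/2))..(0:ℝ), k θ) = ∫ θ in (0:ℝ)..(π/2), k (-θ) := by
    rw [intervalIntegral.integral_comp_neg]
    norm_num
  have hfinal : (∫ θ in (0:ℝ)..(π/2), (k (-θ) + k θ)) = 0 := by
    have hi1 : IntervalIntegrable (fun θ : ℝ => k (-θ)) MeasureTheory.volume 0 (π/2) :=
      (hcont_k.comp continuous_neg).intervalIntegrable _ _
    rw [intervalIntegral.integral_add hi1 (hcont_k.intervalIntegrable _ _)]
    rw [← hneg]
    linarith [hsplit, hik]
  have : ∀ θ : ℝ, k (-θ) + k θ = (ft' (a * Real.sin θ) + ft' (-(a * Real.sin θ))) /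
      (1 - (a * Real.sin θ)^2) := by
    intro θ
    simp only [hk, Real.sin_neg, mul_neg, neg_neg]
    rw [neg_sq]
    ring
  rw [intervalIntegral.integral_congr (fun θ _ => this θ)] at hfinal
  simpa [add_comm] using hfinal

lemma step_A (g : ℝ → ℝ) {b : ℝ} (hb : b ∈ Set.Ioo (0:ℝ) 1)
    (hgcont : ∀ y : ℝ, |y| < 1 → ContinuousAt g y)
    (HG : ∀ a ∈ Set.Ioo (0:ℝ) 1, ∫ θ in (0:ℝ)..(π/2), g (a * Real.sin θ) = 0) :
    ∫ t in (0:ℝ)..1, g (b * t) = 0 := by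
  obtain ⟨hb0, hb1⟩ := hb
  have hπ := Real.pi_pos
  have hπ2 : (1:ℝ) ≤ π/2 := by nlinarith [Real.pi_gt_three]
  have hgOn : ContinuousOn g (Set.Icc 0 b) := fun y hy =>
    (hgcont y (by rw [abs_lt]; constructor <;> [linarith [hy.1]; linarith [hy.2]])).continuousWithinAt
  have hgc : ∀ c : ℝ, |c| ≤ b → Continuous (fun θ : ℝ => g (c * Real.sin θ)) := by
    intro c hc
    rw [continuous_iff_continuousAt]
    intro θ
    have hf : ContinuousAt (fun θ : ℝ => c * Real.sin θ) θ := by fun_prop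
    refine ContinuousAt.comp (hgcont (c * Real.sin θ) ?_) hf
    calc |c * Real.sin θ| = |c| * |Real.sin θ| := abs_mul _ _
      _ ≤ b * 1 := mul_le_mul hc (Real.abs_sin_le_one θ) (abs_nonneg _) (by linarith [abs_nonneg c])
      _ < 1 := by linarith
  -- main epsilon bound
  have key : ∀ ε : ℝ, 0 < ε → |∫ t in (0:ℝ)..1, g (b * t)| ≤ ε * (1 + π/2) := by
    intro ε hε
    obtain ⟨p, hp⟩ := exists_polynomial_near_of_continuousOn 0 b g hgOn ε hε
    -- inner integral with g, multiplied by sin φ, vanishes on [0, π/2]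
    have inner_g_zero : ∀ φ ∈ Set.Icc (0:ℝ) (π/2),
        (∫ θ in (0:ℝ)..(π/2), g (b * Real.sin φ * Real.sin θ)) * Real.sin φ = 0 := by
      intro φ hφ
      rcases eq_or_lt_of_le hφ.1 with h | h
      · rw [← h]; simp
      · have hs1 : 0 < Real.sin φ := Real.sin_pos_of_pos_of_lt_pi h (by linarith [hφ.2])
        have hs2 : Real.sin φ ≤ 1 := Real.sin_le_one φ
        have key := HG (b * Real.sin φ) ⟨by positivity, by nlinarith⟩
        simp_rw [mul_assoc] at key ⊢
        rw [key, zero_mul]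
    -- pointwise bound on [0, b]
    have hpb : ∀ y ∈ Set.Icc 0 b, |Polynomial.eval y p - g y| ≤ ε := fun y hy => (hp y hy).le
    -- integrability facts
    have hint_p : ∀ c : ℝ, IntervalIntegrable
        (fun θ : ℝ => Polynomial.eval (c * Real.sin θ) p) MeasureTheory.volume 0 (π/2) :=
      fun c => ((p.continuous_aeval).comp (continuous_const.mul Real.continuous_sin)
        ).intervalIntegrable _ _
    -- bound on the p-inner integral times sin φ
    have bound_inner : ∀ φ ∈ Set.uIoc (0:ℝ) (π/2),
        ‖(∫ θ in (0:ℝ)..(π/2), Polynomial.eval (b * Real.sin φ * Real.sin θ) p) * Real.sin φ‖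
          ≤ ε * (π/2) := by
      intro φ hφ
      rw [Set.uIoc_of_le (by linarith : (0:ℝ) ≤ π/2)] at hφ
      have hsφ0 : 0 ≤ Real.sin φ := Real.sin_nonneg_of_nonneg_of_le_pi hφ.1.le (by linarith [hφ.2])
      have hsφ1 : Real.sin φ ≤ 1 := Real.sin_le_one φ
      have hcb : |b * Real.sin φ| ≤ b := by
        rw [abs_mul, abs_of_pos hb0, abs_of_nonneg hsφ0]
        nlinarith
      have hz := inner_g_zero φ ⟨hφ.1.le, hφ.2⟩
      have hsub : (∫ θ in (0:ℝ)..(π/2), Polynomial.eval (b * Real.sin φ * Real.sin θ) p)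
            * Real.sin φ
          = (∫ θ in (0:ℝ)..(π/2), (Polynomial.eval (b * Real.sin φ * Real.sin θ) p
              - g (b * Real.sin φ * Real.sin θ))) * Real.sin φ := by
        rw [intervalIntegral.integral_sub (hint_p _) ((hgc _ hcb).intervalIntegrable _ _)]
        rw [sub_mul]
        rw [show (∫ θ in (0:ℝ)..(π/2), g (b * Real.sin φ * Real.sin θ)) * Real.sin φ = 0 from hz]
        ring
      rw [hsub, norm_mul]
      have h1 : ‖∫ θ in (0:ℝ)..(π/2), (Polynomial.eval (b * Real.sin φ * Real.sin θ) p
          - g (b * Real.sin φ * Real.sin θ))‖ ≤ ε * |π/2 - 0| := by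
        apply intervalIntegral.norm_integral_le_of_norm_le_const
        intro θ hθ
        rw [Set.uIoc_of_le (by linarith : (0:ℝ) ≤ π/2)] at hθ
        have hsθ0 : 0 ≤ Real.sin θ := Real.sin_nonneg_of_nonneg_of_le_pi hθ.1.le
          (by linarith [hθ.2])
        have hsθ1 : Real.sin θ ≤ 1 := Real.sin_le_one θ
        have hmul : Real.sin φ * Real.sin θ ≤ 1 := mul_le_one₀ hsφ1 hsθ0 hsθ1
        have hy : b * Real.sin φ * Real.sin θ ∈ Set.Icc 0 b := by
          constructor
          · positivity
          · have := mul_le_mul_of_nonneg_left hmul hb0.le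
            nlinarith
        exact hpb _ hy
      have h2 : ‖Real.sin φ‖ ≤ 1 := by rw [Real.norm_eq_abs]; exact Real.abs_sin_le_one φ
      calc ‖∫ θ in (0:ℝ)..(π/2), (Polynomial.eval (b * Real.sin φ * Real.sin θ) p
            - g (b * Real.sin φ * Real.sin θ))‖ * ‖Real.sin φ‖
          ≤ (ε * |π/2 - 0|) * 1 := mul_le_mul h1 h2 (norm_nonneg _) (by positivity)
        _ = ε * (π/2) := by rw [sub_zero, abs_of_pos (by linarith)]; ring
    -- bound on |π/2 * ∫ p (b t)|
    have hIp : |π/2 * ∫ t in (0:ℝ)..1, Polynomial.eval (b * t) p| ≤ ε * (π/2) * (π/2) := by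
      rw [← poly_id b p]
      have := intervalIntegral.norm_integral_le_of_norm_le_const bound_inner
      rw [Real.norm_eq_abs] at this
      calc |_| ≤ ε * (π/2) * |π/2 - 0| := this
        _ = ε * (π/2) * (π/2) := by rw [sub_zero, abs_of_pos (by linarith)]
    -- bound on |π/2 * ∫ g(bt) - π/2 * ∫ p(bt)|
    have hgbt : IntervalIntegrable (fun t : ℝ => g (b * t)) MeasureTheory.volume 0 1 := by
      apply ContinuousOn.intervalIntegrable
      rw [Set.uIcc_of_le (by norm_num : (0:ℝ) ≤ 1)]
      exact hgOn.comp (continuous_const.mul continuous_id).continuousOn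
        (fun t ht => ⟨by nlinarith [ht.1], by nlinarith [ht.1, ht.2]⟩)
    have hpbt : IntervalIntegrable (fun t : ℝ => Polynomial.eval (b * t) p)
        MeasureTheory.volume 0 1 :=
      ((p.continuous_aeval).comp (continuous_const.mul continuous_id)).intervalIntegrable _ _
    have hdiff : |(∫ t in (0:ℝ)..1, g (b * t)) - ∫ t in (0:ℝ)..1, Polynomial.eval (b * t) p|
        ≤ ε := by
      rw [← intervalIntegral.integral_sub hgbt hpbt]
      have := intervalIntegral.norm_integral_le_of_norm_le_const (C := ε)
        (f := fun t : ℝ => g (b * t) - Polynomial.eval (b * t) p) (a := 0) (b := 1) ?_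
      · rw [Real.norm_eq_abs] at this
        calc _ ≤ ε * |1 - 0| := this
          _ = ε := by norm_num
      · intro t ht
        rw [Set.uIoc_of_le (by norm_num : (0:ℝ) ≤ 1)] at ht
        have hy : b * t ∈ Set.Icc 0 b := ⟨by nlinarith [ht.1], by nlinarith [ht.1, ht.2]⟩
        rw [Real.norm_eq_abs, abs_sub_comm]
        exact hpb _ hy
    -- combine
    have h3 : |π/2 * ∫ t in (0:ℝ)..1, g (b * t)| ≤ π/2 * ε + ε * (π/2) * (π/2) := by
      have : π/2 * (∫ t in (0:ℝ)..1, g (b * t))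
          = π/2 * ((∫ t in (0:ℝ)..1, g (b * t)) - ∫ t in (0:ℝ)..1, Polynomial.eval (b * t) p)
            + π/2 * ∫ t in (0:ℝ)..1, Polynomial.eval (b * t) p := by ring
      rw [this]
      calc _ ≤ |π/2 * ((∫ t in (0:ℝ)..1, g (b * t))
              - ∫ t in (0:ℝ)..1, Polynomial.eval (b * t) p)|
            + |π/2 * ∫ t in (0:ℝ)..1, Polynomial.eval (b * t) p| := abs_add_le _ _
        _ ≤ π/2 * ε + ε * (π/2) * (π/2) := by
            apply add_le_add _ hIp
            rw [abs_mul, abs_of_pos (by linarith : (0:ℝ) < π/2)]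
            exact mul_le_mul_of_nonneg_left hdiff (by linarith)
    have h4 : π/2 * |∫ t in (0:ℝ)..1, g (b * t)| = |π/2 * ∫ t in (0:ℝ)..1, g (b * t)| := by
      rw [abs_mul, abs_of_pos (by linarith : (0:ℝ) < π/2)]
    nlinarith [abs_nonneg (∫ t in (0:ℝ)..1, g (b * t))]
  -- conclude
  by_contra hne
  have hpos : 0 < |∫ t in (0:ℝ)..1, g (b * t)| := abs_pos.mpr hne
  have hπ2 : (1:ℝ) ≤ π/2 := by nlinarith [Real.pi_gt_three]
  have := key (|∫ t in (0:ℝ)..1, g (b * t)| / (2 * (1 + π/2))) (by positivity)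
  have hq : (0:ℝ) < 1 + π/2 := by linarith
  rw [div_mul_eq_mul_div, mul_comm] at this
  have h2 : (1 + π/2) * |∫ t in (0:ℝ)..1, g (b * t)| / (2 * (1 + π/2))
      = |∫ t in (0:ℝ)..1, g (b * t)| / 2 := by
    field_simp
  rw [h2] at this
  linarith


theorem stmt_3 (ft : ℝ → ℝ) (hcont : ContinuousOn ft (Set.Icc (-1 : ℝ) 1))
    (hF : ∀ x ∈ Set.Ioo 0 (π / 2),
      ∫ u in x..(π - x),
        ft (Real.cos u) * Real.sin x /
          (Real.sin u * Real.sqrt (Real.sin u ^ 2 - Real.sin x ^ 2)) = 0) :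
    ∀ t ∈ Set.Icc (-1 : ℝ) 1, ft (-t) = -ft t := by
  have h11 : (-1:ℝ) ≤ 1 := by norm_num
  set ft' : ℝ → ℝ := Set.IccExtend h11 (Set.restrict (Set.Icc (-1:ℝ) 1) ft) with hft'def
  have hft' : Continuous ft' :=
    Continuous.Icc_extend' (continuousOn_iff_continuous_restrict.mp hcont)
  have heq : ∀ t ∈ Set.Icc (-1:ℝ) 1, ft' t = ft t := by
    intro t ht
    rw [hft'def, Set.IccExtend_of_mem h11 _ ht]
    rfl
  set g : ℝ → ℝ := fun c => (ft' c + ft' (-c)) / (1 - c^2) with hgdef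
  have hgcont : ∀ y : ℝ, |y| < 1 → ContinuousAt g y := by
    intro y hy
    have h := abs_lt.mp hy
    have hden : 1 - y^2 ≠ 0 := by nlinarith [h.1, h.2]
    apply ContinuousAt.div
    · exact (hft'.continuousAt).add ((hft'.comp continuous_neg).continuousAt)
    · fun_prop
    · exact hden
  have HG : ∀ a ∈ Set.Ioo (0:ℝ) 1, ∫ θ in (0:ℝ)..(π/2), g (a * Real.sin θ) = 0 := by
    intro a ha
    set x := Real.arccos a with hxdef
    have hx : x ∈ Set.Ioo 0 (π/2) :=
      ⟨Real.arccos_pos.mpr ha.2, Real.arccos_lt_pi_div_two.mpr ha.1⟩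
    have hax : Real.cos x = a := Real.cos_arccos (by linarith [ha.1]) ha.2.le
    have h0 := hF x hx
    have h0' : ∫ u in x..(π-x),
        ft' (Real.cos u) * Real.sin x /
          (Real.sin u * Real.sqrt (Real.sin u ^ 2 - Real.sin x ^ 2)) = 0 := by
      rw [← h0]
      apply intervalIntegral.integral_congr
      intro u _
      simp only [heq _ ⟨Real.neg_one_le_cos u, Real.cos_le_one u⟩]
    have hB := step_B ft' hft' hx h0'
    rw [hax] at hB
    exact hB
  have H : ∀ b ∈ Set.Ioo (0:ℝ) 1, ∫ s in (0:ℝ)..b, g s = 0 := by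
    intro b hb
    have hA := step_A g hb hgcont HG
    rw [intervalIntegral.integral_comp_mul_left (f := g) (c := b) hb.1.ne'] at hA
    rw [mul_zero, mul_one] at hA
    rcases smul_eq_zero.mp hA with h | h
    · exact absurd (inv_eq_zero.mp h) hb.1.ne'
    · exact h
  have gzero : ∀ c ∈ Set.Ioo (0:ℝ) 1, g c = 0 := by
    intro c hc
    have hcat : ContinuousAt g c := hgcont c (abs_lt.mpr ⟨by linarith [hc.1], hc.2⟩)
    have hint : IntervalIntegrable g MeasureTheory.volume 0 c := by
      apply ContinuousOn.intervalIntegrable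
      rw [Set.uIcc_of_le hc.1.le]
      intro y hy
      exact (hgcont y (abs_lt.mpr ⟨by linarith [hy.1], by linarith [hy.2, hc.2]⟩)).continuousWithinAt
    have hmeasat : StronglyMeasurableAtFilter g (nhds c) MeasureTheory.volume :=
      ContinuousAt.stronglyMeasurableAtFilter isOpen_Ioo
        (fun y (hy : y ∈ Set.Ioo (0:ℝ) 1) =>
          hgcont y (abs_lt.mpr ⟨by linarith [hy.1], hy.2⟩)) c hc
    have hder : HasDerivAt (fun u => ∫ s in (0:ℝ)..u, g s) (g c) c :=
      intervalIntegral.integral_hasDerivAt_right hint hmeasat hcat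
    have hev : (fun _ : ℝ => (0:ℝ)) =ᶠ[nhds c] (fun u => ∫ s in (0:ℝ)..u, g s) :=
      Filter.eventuallyEq_of_mem (Ioo_mem_nhds hc.1 hc.2) (fun u hu => (H u hu).symm)
    have hz : HasDerivAt (fun _ : ℝ => (0:ℝ)) (g c) c := hder.congr_of_eventuallyEq hev
    exact (hz.unique (hasDerivAt_const c 0))
  set S : ℝ → ℝ := fun t => ft' t + ft' (-t) with hSdef
  have hScont : Continuous S := hft'.add (hft'.comp continuous_neg)
  have hSIoo : Set.EqOn S (fun _ => 0) (Set.Ioo (0:ℝ) 1) := by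
    intro c hc
    have hg := gzero c hc
    have hden : 1 - c^2 ≠ 0 := by nlinarith [hc.1, hc.2]
    have := (div_eq_zero_iff.mp hg).resolve_right hden
    exact this
  have hScl : Set.EqOn S (fun _ => 0) (Set.Icc (0:ℝ) 1) := by
    have := hSIoo.closure hScont continuous_const
    rwa [closure_Ioo (by norm_num : (0:ℝ) ≠ 1)] at this
  intro t ht
  have habs : |t| ∈ Set.Icc (0:ℝ) 1 := ⟨abs_nonneg t, abs_le.mpr ⟨ht.1, ht.2⟩⟩
  have hSabs : S |t| = 0 := hScl habs
  have hSt : S t = 0 := by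
    rcases le_or_gt 0 t with h | h
    · rwa [abs_of_nonneg h] at hSabs
    · rw [abs_of_neg h] at hSabs
      rw [hSdef]
      simp only
      rw [hSdef] at hSabs
      simp only [neg_neg] at hSabs
      linarith [hSabs]
  have hmt : -t ∈ Set.Icc (-1:ℝ) 1 := ⟨by linarith [ht.2], by linarith [ht.1]⟩
  have e1 : ft' t = ft t := heq t ht
  have e2 : ft' (-t) = ft (-t) := heq (-t) hmt
  rw [hSdef] at hSt
  simp only at hSt
  rw [e1, e2] at hSt
  linarith
end

section
/- For $a < x \le u \le \pi/2$, the inner Abel integral evaluates to a constant: $\int_a^u \frac{\sin x \cos x}{\sqrt{\sin^2 u - \sin^2 x}\sqrt{\sin^2 x - \sin^2 a}}\, dx = \frac{\pi}{2}$ for all $0 < a < u \le \pi/2$. -/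
open Real

set_option maxHeartbeats 1000000 in
theorem stmt_4 (a u : ℝ) (ha : 0 < a) (hau : a < u) (hu : u ≤ π / 2) :
    ∫ x in a..u,
      Real.sin x * Real.cos x /
        (Real.sqrt (Real.sin u ^ 2 - Real.sin x ^ 2) *
          Real.sqrt (Real.sin x ^ 2 - Real.sin a ^ 2)) = π / 2 := by
  have hpi : (0:ℝ) < π := Real.pi_pos
  set g : ℝ → ℝ := fun x =>
    Real.sin x * Real.cos x /
      (Real.sqrt (Real.sin u ^ 2 - Real.sin x ^ 2) *
        Real.sqrt (Real.sin x ^ 2 - Real.sin a ^ 2)) with hgdef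
  have hmem : ∀ t : ℝ, a ≤ t → t ≤ u → t ∈ Set.Icc (-(π/2)) (π/2) :=
    fun t h1 h2 => ⟨by linarith, by linarith⟩
  have hsina : 0 < Real.sin a :=
    Real.sin_pos_of_pos_of_lt_pi ha (by linarith)
  have hsinau : Real.sin a < Real.sin u :=
    Real.strictMonoOn_sin (hmem a le_rfl hau.le) (hmem u hau.le le_rfl) hau
  have hAU : Real.sin a ^ 2 < Real.sin u ^ 2 :=
    pow_lt_pow_left₀ hsinau hsina.le two_ne_zero
  have hUA : (0:ℝ) < Real.sin u ^ 2 - Real.sin a ^ 2 := by linarith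
  -- basic facts for x in the open interval
  have hsinx : ∀ x ∈ Set.Ioo a u, Real.sin a < Real.sin x ∧ Real.sin x < Real.sin u :=
    fun x hx => ⟨Real.strictMonoOn_sin (hmem a le_rfl hau.le) (hmem x hx.1.le hx.2.le) hx.1,
      Real.strictMonoOn_sin (hmem x hx.1.le hx.2.le) (hmem u hau.le le_rfl) hx.2⟩
  have hcosx : ∀ x ∈ Set.Ioo a u, 0 < Real.cos x := fun x hx =>
    Real.cos_pos_of_mem_Ioo ⟨by linarith [hx.1], lt_of_lt_of_le hx.2 hu⟩
  have hsA : ∀ x ∈ Set.Ioo a u, 0 < Real.sin x ^ 2 - Real.sin a ^ 2 := by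
    intro x hx
    have h := (hsinx x hx).1
    nlinarith [hsina]
  have hUs : ∀ x ∈ Set.Ioo a u, 0 < Real.sin u ^ 2 - Real.sin x ^ 2 := by
    intro x hx
    have h := (hsinx x hx).2
    nlinarith [hsina, (hsinx x hx).1]
  -- MVT bounds
  have hcosbound : ∀ x ∈ Set.Ioo a u, Real.sin a * (u - x) ≤ Real.cos x - Real.cos u := by
    intro x hx
    obtain ⟨c, hc, hc'⟩ := exists_hasDerivAt_eq_slope Real.cos (fun t => -Real.sin t) hx.2
      Real.continuousOn_cos (fun t _ => Real.hasDerivAt_cos t)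
    have hux : (0:ℝ) < u - x := by linarith [hx.2]
    have h1 : Real.cos u - Real.cos x = -Real.sin c * (u - x) := by
      field_simp at hc'; linarith [hc']
    have h2 : Real.sin a ≤ Real.sin c :=
      (Real.strictMonoOn_sin (hmem a le_rfl hau.le)
        (hmem c (by linarith [hc.1, hx.1]) (by linarith [hc.2])) (by linarith [hc.1, hx.1])).le
    nlinarith [mul_le_mul_of_nonneg_right h2 hux.le]
  have hsinbound : ∀ x ∈ Set.Ioo a u, Real.cos x * (x - a) ≤ Real.sin x - Real.sin a := by
    intro x hx
    obtain ⟨c, hc, hc'⟩ := exists_hasDerivAt_eq_slope Real.sin Real.cos hx.1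
      Real.continuousOn_sin (fun t _ => Real.hasDerivAt_sin t)
    have hxa : (0:ℝ) < x - a := by linarith [hx.1]
    have h1 : Real.sin x - Real.sin a = Real.cos c * (x - a) := by
      field_simp at hc'; linarith [hc']
    have h2 : Real.cos x ≤ Real.cos c := by
      refine (Real.strictAntiOn_cos ⟨by linarith [hc.1], by linarith [hc.2, hx.2]⟩
        ⟨by linarith [hx.1], by linarith [hx.2]⟩ hc.2).le
    nlinarith [mul_le_mul_of_nonneg_right h2 hxa.le]
  -- pointwise bound on g
  have hbound : ∀ x ∈ Set.Ioo a u,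
      g x ≤ 1 / (Real.sin a * (Real.sqrt (u - x) * Real.sqrt (x - a))) := by
    intro x hx
    have hc := hcosx x hx
    have hsx : 0 < Real.sin x := hsina.trans (hsinx x hx).1
    have hcu : 0 ≤ Real.cos u := Real.cos_nonneg_of_mem_Icc ⟨by linarith, hu⟩
    have hux : (0:ℝ) < u - x := by linarith [hx.2]
    have hxa : (0:ℝ) < x - a := by linarith [hx.1]
    have h1 := hcosbound x hx
    have h2 := hsinbound x hx
    have hfac1 : Real.sin a * (u - x) * Real.cos x ≤ Real.sin u ^ 2 - Real.sin x ^ 2 := by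
      nlinarith [Real.sin_sq_add_cos_sq u, Real.sin_sq_add_cos_sq x,
        mul_le_mul_of_nonneg_right h1 hc.le,
        mul_nonneg (by nlinarith : (0:ℝ) ≤ Real.cos x - Real.cos u) hcu]
    have hfac2 : Real.cos x * (x - a) * Real.sin a ≤ Real.sin x ^ 2 - Real.sin a ^ 2 := by
      nlinarith [mul_le_mul_of_nonneg_right h2 hsina.le,
        mul_nonneg (by nlinarith : (0:ℝ) ≤ Real.sin x - Real.sin a) hsx.le]
    have hE1nn : (0:ℝ) ≤ Real.sin a * (u - x) * Real.cos x := by positivity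
    have hE2nn : (0:ℝ) ≤ Real.cos x * (x - a) * Real.sin a := by positivity
    have he : Real.sqrt (Real.sin a * (u - x) * Real.cos x) *
        Real.sqrt (Real.cos x * (x - a) * Real.sin a) =
        Real.sin a * Real.cos x * (Real.sqrt (u - x) * Real.sqrt (x - a)) := by
      rw [← Real.sqrt_mul hE1nn,
        show Real.sin a * (u - x) * Real.cos x * (Real.cos x * (x - a) * Real.sin a) =
          (Real.sin a * Real.cos x) ^ 2 * ((u - x) * (x - a)) by ring,
        Real.sqrt_mul (sq_nonneg _), Real.sqrt_sq (by positivity),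
        Real.sqrt_mul hux.le]
    have hdenle : Real.sin a * Real.cos x * (Real.sqrt (u - x) * Real.sqrt (x - a)) ≤
        Real.sqrt (Real.sin u ^ 2 - Real.sin x ^ 2) *
          Real.sqrt (Real.sin x ^ 2 - Real.sin a ^ 2) := by
      rw [← he]
      exact mul_le_mul (Real.sqrt_le_sqrt hfac1) (Real.sqrt_le_sqrt hfac2)
        (Real.sqrt_nonneg _) (Real.sqrt_nonneg _)
    have hDpos : 0 < Real.sin a * Real.cos x * (Real.sqrt (u - x) * Real.sqrt (x - a)) := by
      positivity
    have step1 : g x ≤ Real.sin x * Real.cos x /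
        (Real.sin a * Real.cos x * (Real.sqrt (u - x) * Real.sqrt (x - a))) := by
      rw [hgdef]
      exact div_le_div_of_nonneg_left (by positivity) hDpos hdenle
    have step2 : Real.sin x * Real.cos x /
        (Real.sin a * Real.cos x * (Real.sqrt (u - x) * Real.sqrt (x - a))) ≤
        1 / (Real.sin a * (Real.sqrt (u - x) * Real.sqrt (x - a))) := by
      rw [show Real.sin x * Real.cos x = Real.cos x * Real.sin x by ring,
        show Real.sin a * Real.cos x * (Real.sqrt (u - x) * Real.sqrt (x - a)) =
          Real.cos x * (Real.sin a * (Real.sqrt (u - x) * Real.sqrt (x - a))) by ring,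
        mul_div_mul_left _ _ hc.ne']
      gcongr
      · exact Real.sin_le_one x
    exact step1.trans step2
  -- integrability
  have hgnn : ∀ x ∈ Set.Ioo a u, 0 ≤ g x := by
    intro x hx
    have hsx : 0 < Real.sin x := hsina.trans (hsinx x hx).1
    have hc := hcosx x hx
    rw [hgdef]
    positivity
  have hgmeas : MeasureTheory.AEStronglyMeasurable g MeasureTheory.volume := by
    refine Measurable.aestronglyMeasurable ?_
    apply Measurable.div
    · fun_prop
    · fun_prop
  have hrpow : ∀ y : ℝ, 0 < y → (y : ℝ) ^ (-(1/2) : ℝ) = (Real.sqrt y)⁻¹ := by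
    intro y hy
    rw [Real.rpow_neg hy.le, ← Real.sqrt_eq_rpow]
  set m : ℝ := (a + u) / 2 with hmdef
  have ham : a < m := by rw [hmdef]; linarith
  have hmu : m < u := by rw [hmdef]; linarith
  have hint : IntervalIntegrable g MeasureTheory.volume a u := by
    have int1 : IntervalIntegrable g MeasureTheory.volume a m := by
      have K1 : IntervalIntegrable
          (fun x => (1 / (Real.sin a * Real.sqrt (u - m))) * ((x - a) ^ (-(1/2) : ℝ)))
          MeasureTheory.volume a m := by
        have h0 := intervalIntegral.intervalIntegrable_rpow' (a := 0) (b := m - a)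
          (r := -(1/2)) (by norm_num)
        have h1 := h0.comp_sub_right a
        rw [zero_add, sub_add_cancel] at h1
        exact h1.const_mul _
      refine K1.mono_fun hgmeas.restrict ?_
      filter_upwards [MeasureTheory.self_mem_ae_restrict measurableSet_uIoc] with x hx
      rw [Set.uIoc_of_le ham.le] at hx
      have hxIoo : x ∈ Set.Ioo a u := ⟨hx.1, lt_of_le_of_lt hx.2 hmu⟩
      have hxa : (0:ℝ) < x - a := by linarith [hx.1]
      have hum : (0:ℝ) < u - m := by linarith
      have hb := hbound x hxIoo
      have hrhs : (1 / (Real.sin a * Real.sqrt (u - m))) * ((x - a) ^ (-(1/2) : ℝ)) =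
          1 / (Real.sin a * (Real.sqrt (u - m) * Real.sqrt (x - a))) := by
        rw [hrpow _ hxa]
        field_simp
      rw [Real.norm_eq_abs, Real.norm_eq_abs, abs_of_nonneg (hgnn x hxIoo),
        abs_of_nonneg (by rw [hrhs]; positivity), hrhs]
      refine hb.trans (one_div_le_one_div_of_le (by positivity) ?_)
      gcongr
      exact hx.2
    have int2 : IntervalIntegrable g MeasureTheory.volume m u := by
      have K2 : IntervalIntegrable
          (fun x => (1 / (Real.sin a * Real.sqrt (m - a))) * ((u - x) ^ (-(1/2) : ℝ)))
          MeasureTheory.volume m u := by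
        have h0 := intervalIntegral.intervalIntegrable_rpow' (a := 0) (b := u - m)
          (r := -(1/2)) (by norm_num)
        have h1 := h0.comp_sub_left u
        rw [sub_zero, sub_sub_cancel] at h1
        exact (h1.symm).const_mul _
      refine K2.mono_fun hgmeas.restrict ?_
      filter_upwards [MeasureTheory.self_mem_ae_restrict measurableSet_uIoc] with x hx
      rw [Set.uIoc_of_le hmu.le] at hx
      rcases eq_or_lt_of_le hx.2 with heq | hxu
      · have hg0 : g u = 0 := by
          rw [hgdef]
          simp only [sub_self, Real.sqrt_zero, zero_mul, div_zero]
        rw [heq, hg0, norm_zero]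
        exact norm_nonneg _
      · have hxIoo : x ∈ Set.Ioo a u := ⟨ham.trans hx.1, hxu⟩
        have hux : (0:ℝ) < u - x := by linarith
        have hma : (0:ℝ) < m - a := by linarith
        have hb := hbound x hxIoo
        have hrhs : (1 / (Real.sin a * Real.sqrt (m - a))) * ((u - x) ^ (-(1/2) : ℝ)) =
            1 / (Real.sin a * (Real.sqrt (u - x) * Real.sqrt (m - a))) := by
          rw [hrpow _ hux]
          field_simp
        rw [Real.norm_eq_abs, Real.norm_eq_abs, abs_of_nonneg (hgnn x hxIoo),
          abs_of_nonneg (by rw [hrhs]; positivity), hrhs]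
        refine hb.trans (one_div_le_one_div_of_le (by positivity) ?_)
        gcongr
        exact hx.1.le
    exact int1.trans int2
  -- antiderivative
  set F : ℝ → ℝ := fun y => Real.arcsin
    ((2 * Real.sin y ^ 2 - (Real.sin a ^ 2 + Real.sin u ^ 2)) /
      (Real.sin u ^ 2 - Real.sin a ^ 2)) / 2 with hFdef
  have hFcont : Continuous F := by
    apply Continuous.div_const
    exact Real.continuous_arcsin.comp (by fun_prop)
  have hFderiv : ∀ x ∈ Set.Ioo a u, HasDerivAt F (g x) x := by
    intro x hx
    have hsA' := hsA x hx
    have hUs' := hUs x hx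
    set hh : ℝ := (2 * Real.sin x ^ 2 - (Real.sin a ^ 2 + Real.sin u ^ 2)) /
      (Real.sin u ^ 2 - Real.sin a ^ 2) with hhdef
    have hhlt : hh < 1 := by
      rw [hhdef, div_lt_one hUA]; nlinarith
    have hhgt : -1 < hh := by
      rw [hhdef, lt_div_iff₀ hUA]; nlinarith
    have hinner : HasDerivAt (fun y => (2 * Real.sin y ^ 2 - (Real.sin a ^ 2 + Real.sin u ^ 2)) /
        (Real.sin u ^ 2 - Real.sin a ^ 2))
        (4 * Real.sin x * Real.cos x / (Real.sin u ^ 2 - Real.sin a ^ 2)) x := by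
      have h := (((Real.hasDerivAt_sin x).pow 2).const_mul (2:ℝ)).sub_const
        (Real.sin a ^ 2 + Real.sin u ^ 2)
      have h' := h.div_const (Real.sin u ^ 2 - Real.sin a ^ 2)
      refine h'.congr_deriv ?_
      ring
    have harc := ((Real.hasDerivAt_arcsin hhgt.ne' hhlt.ne).comp x hinner).div_const 2
    have hs1 : Real.sqrt (Real.sin u ^ 2 - Real.sin x ^ 2) ≠ 0 :=
      (Real.sqrt_pos.mpr hUs').ne'
    have hs2 : Real.sqrt (Real.sin x ^ 2 - Real.sin a ^ 2) ≠ 0 :=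
      (Real.sqrt_pos.mpr hsA').ne'
    have hsqrt : Real.sqrt (1 - hh ^ 2) =
        2 * Real.sqrt (Real.sin u ^ 2 - Real.sin x ^ 2) *
          Real.sqrt (Real.sin x ^ 2 - Real.sin a ^ 2) / (Real.sin u ^ 2 - Real.sin a ^ 2) := by
      have hval : 1 - hh ^ 2 =
          (2 * Real.sqrt (Real.sin u ^ 2 - Real.sin x ^ 2) *
            Real.sqrt (Real.sin x ^ 2 - Real.sin a ^ 2) / (Real.sin u ^ 2 - Real.sin a ^ 2)) ^ 2 := by
        rw [hhdef, div_pow, div_pow, mul_pow, mul_pow, Real.sq_sqrt hUs'.le,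
          Real.sq_sqrt hsA'.le]
        field_simp
        ring
      rw [hval, Real.sqrt_sq (by positivity)]
    refine harc.congr_deriv ?_
    rw [hsqrt, hgdef]
    field_simp
    ring
  have key : ∫ x in a..u, g x = F u - F a := by
    refine intervalIntegral.integral_eq_sub_of_hasDeriv_right_of_le hau.le
      (hFcont.continuousOn) (fun x hx => (hFderiv x hx).hasDerivWithinAt) hint
  rw [show (∫ x in a..u,
      Real.sin x * Real.cos x /
        (Real.sqrt (Real.sin u ^ 2 - Real.sin x ^ 2) *
          Real.sqrt (Real.sin x ^ 2 - Real.sin a ^ 2))) = ∫ x in a..u, g x from rfl, key]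
  have hFu : F u = π / 4 := by
    have : (2 * Real.sin u ^ 2 - (Real.sin a ^ 2 + Real.sin u ^ 2)) /
        (Real.sin u ^ 2 - Real.sin a ^ 2) = 1 := by
      rw [div_eq_one_iff_eq hUA.ne']; ring
    rw [hFdef]; simp only [this, Real.arcsin_one]; ring
  have hFa : F a = -(π / 4) := by
    have : (2 * Real.sin a ^ 2 - (Real.sin a ^ 2 + Real.sin u ^ 2)) /
        (Real.sin u ^ 2 - Real.sin a ^ 2) = -1 := by
      rw [div_eq_iff hUA.ne']; ring
    rw [hFdef]; simp only [this, Real.arcsin_neg_one]; ring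
  rw [hFu, hFa]; ring
end

section
/- For the surface of revolution with metric $ds^2 = (c + \tilde a(\cos u))^2 du^2 + \sin^2 u\, dv^2$ on $u \in (0,\pi)$, where $\tilde a : [-1,1] \to [-c,c]$ is continuous and odd and $c > 0$, the period function is constant: $\Phi_M(x) = 2\int_x^{\pi - x} \frac{(c + \tilde a(\cos u))\sin x}{\sin u \sqrt{\sin^2 u - \sin^2 x}}\,du = 2c\pi$ for all $x \in (0, \pi/2)$. -/
open Real

open Set MeasureTheory Filter in
private lemma interior_facts' {x u : ℝ} (hx0 : 0 < x) (hu : u ∈ Set.Ioo x (π - x)) :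
    0 < Real.sin u ∧ 0 < Real.sin u ^ 2 - Real.sin x ^ 2 := by
  obtain ⟨h1, h2⟩ := hu
  have hπ : 0 < π := Real.pi_pos
  have hu0 : 0 < u := hx0.trans h1
  have huπ : u < π := by linarith
  have hsu : 0 < Real.sin u := Real.sin_pos_of_pos_of_lt_pi hu0 huπ
  have hc1 : Real.cos u < Real.cos x :=
    Real.cos_lt_cos_of_nonneg_of_le_pi hx0.le huπ.le h1
  have hc2 : Real.cos (π - x) < Real.cos u :=
    Real.cos_lt_cos_of_nonneg_of_le_pi hu0.le (by linarith) h2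
  rw [Real.cos_pi_sub] at hc2
  have hq : Real.sin u ^ 2 - Real.sin x ^ 2 = Real.cos x ^ 2 - Real.cos u ^ 2 := by
    have := Real.sin_sq_add_cos_sq u
    have := Real.sin_sq_add_cos_sq x
    nlinarith
  refine ⟨hsu, ?_⟩
  rw [hq]
  nlinarith

open Set MeasureTheory Filter in
private lemma deriv_F {x u : ℝ} (hx0 : 0 < x) (hx2 : x < π/2) (hu : u ∈ Set.Ioo x (π - x)) :
    HasDerivAt (fun u => -Real.arctan (Real.sin x * Real.cos u /
        Real.sqrt (Real.sin u ^ 2 - Real.sin x ^ 2)))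
      (Real.sin x / (Real.sin u * Real.sqrt (Real.sin u ^ 2 - Real.sin x ^ 2))) u := by
  obtain ⟨hsu, hq⟩ := interior_facts' hx0 hu
  set q : ℝ → ℝ := fun u => Real.sin u ^ 2 - Real.sin x ^ 2 with hqdef
  have hD : 0 < Real.sqrt (q u) := Real.sqrt_pos.mpr hq
  have hD2 : Real.sqrt (q u) ^ 2 = q u := Real.sq_sqrt hq.le
  have hqd : HasDerivAt q (2 * Real.sin u ^ 1 * Real.cos u) u := by
    rw [hqdef]; simpa using ((Real.hasDerivAt_sin u).pow 2).sub_const (Real.sin x ^ 2)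
  have hDd : HasDerivAt (fun u => Real.sqrt (q u))
      ((2 * Real.sin u ^ 1 * Real.cos u) / (2 * Real.sqrt (q u))) u :=
    hqd.sqrt (ne_of_gt hq)
  have hnum : HasDerivAt (fun u => Real.sin x * Real.cos u) (Real.sin x * (-Real.sin u)) u :=
    (Real.hasDerivAt_cos u).const_mul (Real.sin x)
  have hs : HasDerivAt (fun u => Real.sin x * Real.cos u / Real.sqrt (q u))
      ((Real.sin x * (-Real.sin u) * Real.sqrt (q u) -
        Real.sin x * Real.cos u * ((2 * Real.sin u ^ 1 * Real.cos u) / (2 * Real.sqrt (q u)))) /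
        (Real.sqrt (q u)) ^ 2) u := hnum.div hDd (ne_of_gt hD)
  have harc := (Real.hasDerivAt_arctan (Real.sin x * Real.cos u / Real.sqrt (q u))).comp u hs
  have := harc.neg
  convert this using 1
  · rfl
  · rfl
  · rfl
  set D := Real.sqrt (q u)
  have hqu : D ^ 2 = Real.sin u ^ 2 - Real.sin x ^ 2 := hD2
  have hsc : Real.sin u ^ 2 + Real.cos u ^ 2 = 1 := Real.sin_sq_add_cos_sq u
  field_simp
  linear_combination (Real.sin x*(1 - Real.sin u^2)) * hqu - (Real.sin x*(Real.sin u^2 - Real.sin x^2)) * hsc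

open Set MeasureTheory Filter in
private lemma g_integral {x : ℝ} (hx0 : 0 < x) (hx2 : x < π/2) :
    IntegrableOn (fun u => Real.sin x / (Real.sin u * Real.sqrt (Real.sin u ^ 2 - Real.sin x ^ 2)))
        (Set.Ioo x (π - x)) volume ∧
    ∫ u in Set.Ioo x (π - x),
        Real.sin x / (Real.sin u * Real.sqrt (Real.sin u ^ 2 - Real.sin x ^ 2)) = π := by
  have hπ : 0 < π := Real.pi_pos
  set g : ℝ → ℝ := fun u => Real.sin x / (Real.sin u * Real.sqrt (Real.sin u ^ 2 - Real.sin x ^ 2))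
    with hgdef
  set F : ℝ → ℝ := fun u => -Real.arctan (Real.sin x * Real.cos u /
      Real.sqrt (Real.sin u ^ 2 - Real.sin x ^ 2)) with hFdef
  have hsx : 0 < Real.sin x := Real.sin_pos_of_pos_of_lt_pi hx0 (by linarith)
  have hcx : 0 < Real.cos x := Real.cos_pos_of_mem_Ioo ⟨by linarith, hx2⟩
  -- positivity of g on the interior
  have hgpos : ∀ u ∈ Set.Ioo x (π - x), 0 < g u := by
    intro u hu
    obtain ⟨hsu, hq⟩ := interior_facts' hx0 hu
    exact div_pos hsx (mul_pos hsu (Real.sqrt_pos.mpr hq))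
  -- continuity of g on the interior
  have hgcont : ContinuousOn g (Set.Ioo x (π - x)) := by
    apply ContinuousOn.div continuousOn_const
    · exact (Real.continuous_sin.continuousOn.mul
        ((((Real.continuous_sin.pow 2).sub continuous_const).sqrt).continuousOn))
    · intro u hu
      obtain ⟨hsu, hq⟩ := interior_facts' hx0 hu
      exact ne_of_gt (mul_pos hsu (Real.sqrt_pos.mpr hq))
  have hFd : ∀ u ∈ Set.Ioo x (π - x), HasDerivAt F (g u) u := fun u hu =>
    deriv_F hx0 hx2 hu
  have hFbnd : ∀ u, -(π/2) ≤ F u ∧ F u ≤ π/2 := by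
    intro u
    rw [hFdef]
    constructor
    · simp only [neg_le_neg_iff]
      exact (Real.arctan_lt_pi_div_two _).le
    · simp only [neg_le]
      exact (Real.neg_pi_div_two_lt_arctan _).le.trans' (by linarith [Real.neg_pi_div_two_lt_arctan (Real.sin x * Real.cos u / Real.sqrt (Real.sin u ^ 2 - Real.sin x ^ 2))])
  have hFsym : ∀ u, F (π - u) = - F u := by
    intro u
    rw [hFdef]
    simp only [Real.cos_pi_sub, Real.sin_pi_sub, neg_neg, mul_neg, neg_div, Real.arctan_neg]
  -- the sequences
  set a : ℕ → ℝ := fun n => x + (π/2 - x) * (1/(n+1)) with hadef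
  set b : ℕ → ℝ := fun n => π - a n with hbdef
  have hbn : ∀ n, b n = π - a n := fun _ => rfl
  clear_value g F a b
  have haux : ∀ n : ℕ, (0:ℝ) < 1/((n:ℝ)+1) ∧ (1:ℝ)/((n:ℝ)+1) ≤ 1 := by
    intro n
    constructor
    · positivity
    · rw [div_le_one (by positivity)]; simp
  have haval : ∀ n, a n = x + (π/2 - x) * (1/(n+1)) := fun n => by rw [hadef]
  have hamem : ∀ n, a n ∈ Set.Ioo x (π - x) := by
    intro n
    obtain ⟨h1, h2⟩ := haux n
    rw [haval]
    constructor <;> [nlinarith; nlinarith]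
  have habound : ∀ n, a n ≤ π/2 := by
    intro n
    obtain ⟨h1, h2⟩ := haux n
    rw [haval]; nlinarith
  have hbmem : ∀ n, b n ∈ Set.Ioo x (π - x) := by
    intro n
    obtain ⟨h1, h2⟩ := hamem n
    rw [hbn]
    exact ⟨by linarith, by linarith⟩
  have hab : ∀ n, a n ≤ b n := by
    intro n; have := habound n; rw [hbn]; linarith
  have haT : Filter.Tendsto a Filter.atTop (nhds x) := by
    have h : Filter.Tendsto (fun n : ℕ => x + (π/2 - x) * (1/(n+1))) Filter.atTop
        (nhds (x + (π/2 - x) * 0)) :=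
      tendsto_const_nhds.add (tendsto_const_nhds.mul tendsto_one_div_add_atTop_nhds_zero_nat)
    rw [hadef]
    simpa using h
  have hbT : Filter.Tendsto b Filter.atTop (nhds (π - x)) := by
    exact (haT.const_sub π).congr fun n => (hbn n).symm
  have hIcc : ∀ n, Set.Icc (a n) (b n) ⊆ Set.Ioo x (π - x) := by
    intro n u hu
    exact ⟨(hamem n).1.trans_le hu.1, hu.2.trans_lt (hbmem n).2⟩
  have hii : ∀ n, IntervalIntegrable g volume (a n) (b n) := by
    intro n
    apply ContinuousOn.intervalIntegrable
    rw [Set.uIcc_of_le (hab n)]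
    exact hgcont.mono (hIcc n)
  have hcomp : ∀ n, ∫ u in (a n)..(b n), g u = F (b n) - F (a n) := by
    intro n
    apply intervalIntegral.integral_eq_sub_of_hasDerivAt
    · intro u hu
      rw [Set.uIcc_of_le (hab n)] at hu
      exact hFd u (hIcc n hu)
    · exact hii n
  -- integrability of g on Ioc
  have hInt : IntegrableOn g (Set.Ioc x (π - x)) volume := by
    apply MeasureTheory.integrableOn_Ioc_of_intervalIntegral_norm_bounded
      (f := g) (l := Filter.atTop) (a := a) (b := b) (I := π) ?_ haT hbT
    · filter_upwards with n
      have heqn : ∫ u in Set.Ioc (a n) (b n), ‖g u‖ = ∫ u in Set.Ioc (a n) (b n), g u := by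
        apply MeasureTheory.setIntegral_congr_fun measurableSet_Ioc
        intro u hu
        exact Real.norm_of_nonneg (hgpos u (hIcc n ⟨hu.1.le, hu.2⟩)).le
      rw [heqn, ← intervalIntegral.integral_of_le (hab n), hcomp n]
      obtain ⟨h1, h2⟩ := hFbnd (a n)
      obtain ⟨h3, h4⟩ := hFbnd (b n)
      linarith
    · intro n
      rw [← intervalIntegrable_iff_integrableOn_Ioc_of_le (hab n)]
      exact hii n
  have hIntIoo : IntegrableOn g (Set.Ioo x (π - x)) volume :=
    hInt.mono_set Set.Ioo_subset_Ioc_self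
  refine ⟨hIntIoo, ?_⟩
  -- limit of F (a n) is -(π/2)
  have hDseq : Filter.Tendsto (fun n => Real.sqrt (Real.sin (a n) ^ 2 - Real.sin x ^ 2))
      Filter.atTop (nhdsWithin 0 (Set.Ioi 0)) := by
    rw [tendsto_nhdsWithin_iff]
    constructor
    · have hc : Continuous fun u => Real.sqrt (Real.sin u ^ 2 - Real.sin x ^ 2) :=
        ((Real.continuous_sin.pow 2).sub continuous_const).sqrt
      have := (hc.tendsto x).comp haT
      simpa [Function.comp_def] using this
    · filter_upwards with n
      exact Real.sqrt_pos.mpr (interior_facts' hx0 (hamem n)).2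
  have hnum : Filter.Tendsto (fun n => Real.sin x * Real.cos (a n)) Filter.atTop
      (nhds (Real.sin x * Real.cos x)) :=
    tendsto_const_nhds.mul ((Real.continuous_cos.tendsto x).comp haT)
  have hsT : Filter.Tendsto (fun n => Real.sin x * Real.cos (a n) /
      Real.sqrt (Real.sin (a n) ^ 2 - Real.sin x ^ 2)) Filter.atTop Filter.atTop := by
    simp only [div_eq_mul_inv]
    exact Filter.Tendsto.pos_mul_atTop (mul_pos hsx hcx) hnum
      (tendsto_inv_nhdsGT_zero.comp hDseq)
  have hFaT : Filter.Tendsto (fun n => F (a n)) Filter.atTop (nhds (-(π/2))) := by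
    have h1 := (Real.tendsto_arctan_atTop.mono_right nhdsWithin_le_nhds).comp hsT
    have h2 := h1.neg
    refine h2.congr fun n => ?_
    simp only [hFdef, Function.comp]
  have hlim : Filter.Tendsto (fun n => F (b n) - F (a n)) Filter.atTop (nhds π) := by
    have h2 := hFaT.const_mul (-2 : ℝ)
    rw [show (-2:ℝ) * -(π/2) = π by ring] at h2
    refine h2.congr fun n => ?_
    rw [hbn, hFsym]; ring
  -- identification via AECover
  have hcover : AECover (volume.restrict (Set.Ioo x (π - x))) Filter.atTop
      (fun n => Set.Ioc (a n) (b n)) := MeasureTheory.aecover_Ioo_of_Ioc haT hbT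
  have htend := hcover.integral_tendsto_of_countably_generated hIntIoo
  have heq : ∀ n, ∫ u in Set.Ioc (a n) (b n), g u ∂(volume.restrict (Set.Ioo x (π - x)))
      = F (b n) - F (a n) := by
    intro n
    rw [Measure.restrict_restrict measurableSet_Ioc]
    rw [Set.inter_eq_left.mpr (fun u hu => hIcc n ⟨hu.1.le, hu.2⟩)]
    rw [← intervalIntegral.integral_of_le (hab n)]
    exact hcomp n
  simp only [heq] at htend
  exact tendsto_nhds_unique htend hlim

theorem stmt_12 (c : ℝ) (hc : 0 < c) (ta : ℝ → ℝ)
    (hcont : ContinuousOn ta (Set.Icc (-1 : ℝ) 1))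
    (hmaps : ∀ t ∈ Set.Icc (-1 : ℝ) 1, ta t ∈ Set.Icc (-c) c)
    (hodd : ∀ t ∈ Set.Icc (-1 : ℝ) 1, ta (-t) = -ta t) :
    ∀ x ∈ Set.Ioo 0 (π / 2),
      2 * ∫ u in x..(π - x),
        (c + ta (Real.cos u)) * Real.sin x /
          (Real.sin u * Real.sqrt (Real.sin u ^ 2 - Real.sin x ^ 2)) = 2 * c * π := by
  intro x hx
  obtain ⟨hx0, hx2⟩ := hx
  have hπ : 0 < π := Real.pi_pos
  have hxb : x ≤ π - x := by linarith
  obtain ⟨hgInt, hgVal⟩ := g_integral hx0 hx2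
  set g : ℝ → ℝ := fun u => Real.sin x / (Real.sin u * Real.sqrt (Real.sin u ^ 2 - Real.sin x ^ 2))
    with hgdef
  set h : ℝ → ℝ := fun u => ta (Real.cos u) * Real.sin x /
      (Real.sin u * Real.sqrt (Real.sin u ^ 2 - Real.sin x ^ 2)) with hhdef
  -- pointwise splitting
  have hsplit : ∀ u, (c + ta (Real.cos u)) * Real.sin x /
      (Real.sin u * Real.sqrt (Real.sin u ^ 2 - Real.sin x ^ 2)) = c * g u + h u := by
    intro u
    rw [hgdef, hhdef]
    ring
  -- continuity of ta ∘ cos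
  have htacos : ContinuousOn (fun u => ta (Real.cos u)) (Set.Ioo x (π - x)) := by
    apply hcont.comp Real.continuous_cos.continuousOn
    intro u _
    exact ⟨Real.neg_one_le_cos u, Real.cos_le_one u⟩
  -- continuity of h on the interior
  have hhcont : ContinuousOn h (Set.Ioo x (π - x)) := by
    rw [hhdef]
    apply ContinuousOn.div (htacos.mul continuousOn_const)
    · exact (Real.continuous_sin.continuousOn.mul
        ((((Real.continuous_sin.pow 2).sub continuous_const).sqrt).continuousOn))
    · intro u hu
      obtain ⟨hsu, hq⟩ := interior_facts' hx0 hu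
      exact ne_of_gt (mul_pos hsu (Real.sqrt_pos.mpr hq))
  have hcgInt : MeasureTheory.IntegrableOn (fun u => c * g u) (Set.Ioo x (π - x)) MeasureTheory.volume :=
    hgInt.const_mul c
  -- integrability of h
  have hhInt : MeasureTheory.IntegrableOn h (Set.Ioo x (π - x)) MeasureTheory.volume := by
    apply MeasureTheory.Integrable.mono hcgInt (hhcont.aestronglyMeasurable measurableSet_Ioo)
    rw [MeasureTheory.ae_restrict_iff' measurableSet_Ioo]
    filter_upwards with u hu
    obtain ⟨hsu, hq⟩ := interior_facts' hx0 hu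
    have hsx : 0 < Real.sin x := Real.sin_pos_of_pos_of_lt_pi hx0 (by linarith)
    have hgu : 0 < g u := by
      rw [hgdef]
      exact div_pos hsx (mul_pos hsu (Real.sqrt_pos.mpr hq))
    have hta : |ta (Real.cos u)| ≤ c := by
      obtain ⟨h1, h2⟩ := hmaps (Real.cos u) ⟨Real.neg_one_le_cos u, Real.cos_le_one u⟩
      exact abs_le.mpr ⟨h1, h2⟩
    have hhu : h u = ta (Real.cos u) * g u := by
      rw [hhdef, hgdef]; ring
    rw [hhu, Real.norm_eq_abs, Real.norm_eq_abs, abs_mul, abs_mul]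
    rw [abs_of_pos hgu, abs_of_pos hc]
    exact mul_le_mul_of_nonneg_right hta hgu.le
  -- the h-integral vanishes by odd symmetry
  have hrefl : ∀ u, h (π - u) = - h u := by
    intro u
    rw [hhdef]
    simp only [Real.cos_pi_sub, Real.sin_pi_sub]
    rw [hodd (Real.cos u) ⟨Real.neg_one_le_cos u, Real.cos_le_one u⟩]
    ring
  have hJ : ∫ u in x..(π - x), h u = 0 := by
    have h1 := intervalIntegral.integral_comp_sub_left (a := x) (b := π - x) h π
    rw [show π - (π - x) = x by ring] at h1
    have h2 : ∫ u in x..(π - x), h (π - u) = - ∫ u in x..(π - x), h u := by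
      rw [← intervalIntegral.integral_neg]
      apply intervalIntegral.integral_congr
      intro u _
      exact hrefl u
    rw [h2] at h1
    linarith
  -- assemble
  rw [intervalIntegral.integral_of_le hxb, MeasureTheory.integral_Ioc_eq_integral_Ioo]
  have hsum : ∫ u in Set.Ioo x (π - x),
      (c + ta (Real.cos u)) * Real.sin x /
        (Real.sin u * Real.sqrt (Real.sin u ^ 2 - Real.sin x ^ 2))
      = (∫ u in Set.Ioo x (π - x), c * g u) + ∫ u in Set.Ioo x (π - x), h u := by
    rw [← MeasureTheory.integral_add hcgInt hhInt]
    apply MeasureTheory.setIntegral_congr_fun measurableSet_Ioo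
    intro u _
    exact hsplit u
  have hHIoo : ∫ u in Set.Ioo x (π - x), h u = 0 := by
    rw [← MeasureTheory.integral_Ioc_eq_integral_Ioo,
      ← intervalIntegral.integral_of_le hxb]
    exact hJ
  rw [hsum, hHIoo, MeasureTheory.integral_const_mul]
  rw [hgdef] at hgVal ⊢
  rw [hgVal]
  ring
end

section
/- If $f : \mathbb{R} \to \mathbb{R}$ is smooth with $f(u_0) = c > 0$, $f'(u_0) = 0$, $f''(u_0) > 0$, and $f > c$ on $(u_0, u_0 + \epsilon)$, then the improper integral $\int_{u_0}^{u_0+\epsilon} \frac{c}{f(u)\sqrt{f(u)^2 - c^2}}\,du$ diverges to $+\infty$. -/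
open MeasureTheory Set Filter Topology

theorem stmt_16 (f : ℝ → ℝ) (u₀ c ε : ℝ)
    (hf : ContDiff ℝ (⊤ : ℕ∞) f) (hfc : f u₀ = c) (hc : 0 < c)
    (hf' : deriv f u₀ = 0) (hf'' : 0 < iteratedDeriv 2 f u₀)
    (hε : 0 < ε) (hgt : ∀ u ∈ Set.Ioo u₀ (u₀ + ε), c < f u) :
    ¬ IntegrableOn (fun u => c / (f u * Real.sqrt (f u ^ 2 - c ^ 2)))
        (Set.Ioo u₀ (u₀ + ε)) := by
  intro hint
  set g : ℝ → ℝ := fun u => c / (f u * Real.sqrt (f u ^ 2 - c ^ 2)) with hgdef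
  have hfT : ContDiff ℝ (↑(⊤ : ℕ∞)) f := hf.of_le (by simp)
  have hfd : ContDiff ℝ (↑(⊤ : ℕ∞)) (deriv f) := (contDiff_infty_iff_deriv.mp hfT).2
  have hfdd : ContDiff ℝ (↑(⊤ : ℕ∞)) (deriv (deriv f)) := (contDiff_infty_iff_deriv.mp hfd).2
  obtain ⟨M₀, hM₀⟩ := (isCompact_Icc (a := u₀) (b := u₀ + ε)).exists_bound_of_continuousOn
    hfdd.continuous.continuousOn
  set M : ℝ := max M₀ 1 with hMdef
  have hM1 : (1 : ℝ) ≤ M := le_max_right _ _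
  have hM0 : (0 : ℝ) < M := lt_of_lt_of_le one_pos hM1
  -- step 1 : |deriv f x| ≤ M * (x - u₀) on Icc
  have h1 : ∀ x ∈ Icc u₀ (u₀ + ε), |deriv f x| ≤ M * (x - u₀) := by
    intro x hx
    have := Convex.norm_image_sub_le_of_norm_deriv_le (f := deriv f) (C := M)
      (fun y _ => (hfd.differentiable (by simp)).differentiableAt)
      (fun y hy => le_trans (hM₀ y hy) (le_max_left _ _))
      (convex_Icc u₀ (u₀ + ε)) (left_mem_Icc.2 (by linarith)) hx
    rw [hf', sub_zero] at this
    have hx0 : u₀ ≤ x := hx.1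
    simpa [Real.norm_eq_abs, abs_of_nonneg (sub_nonneg.2 hx0)] using this
  -- step 2 : f x - c ≤ M * (x - u₀)^2 on Icc
  have h2 : ∀ x ∈ Icc u₀ (u₀ + ε), f x - c ≤ M * (x - u₀) ^ 2 := by
    intro x hx
    have hsub : Icc u₀ x ⊆ Icc u₀ (u₀ + ε) := Icc_subset_Icc le_rfl hx.2
    have := Convex.norm_image_sub_le_of_norm_deriv_le (f := f) (C := M * (x - u₀))
      (fun y _ => (hfT.differentiable (by simp)).differentiableAt)
      (fun y hy => by
        have := h1 y (hsub hy)
        have : |deriv f y| ≤ M * (x - u₀) := by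
          refine this.trans ?_
          have : y - u₀ ≤ x - u₀ := by have := hy.2; linarith
          nlinarith
        simpa [Real.norm_eq_abs] using this)
      (convex_Icc u₀ x) (left_mem_Icc.2 hx.1) (right_mem_Icc.2 hx.1)
    rw [hfc] at this
    have hx0 : u₀ ≤ x := hx.1
    have habs : |f x - c| ≤ M * (x - u₀) * (x - u₀) := by
      simpa [Real.norm_eq_abs, abs_of_nonneg (sub_nonneg.2 hx0)] using this
    calc f x - c ≤ |f x - c| := le_abs_self _
      _ ≤ M * (x - u₀) * (x - u₀) := habs
      _ = M * (x - u₀) ^ 2 := by ring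
  -- constants
  set A : ℝ := c + M * ε ^ 2 with hAdef
  have hA0 : 0 < A := by positivity
  set S : ℝ := Real.sqrt (M * (A + c)) with hSdef
  have hS0 : 0 < S := Real.sqrt_pos.2 (by positivity)
  set k : ℝ := c / (A * S) with hkdef
  have hk0 : 0 < k := by positivity
  -- the key lower bound : for x ∈ Ioo, g x ≥ k / (x - u₀)
  have key : ∀ x ∈ Ioo u₀ (u₀ + ε), k / (x - u₀) ≤ g x := by
    intro x hx
    have hxI : x ∈ Icc u₀ (u₀ + ε) := ⟨hx.1.le, hx.2.le⟩
    have hx0 : 0 < x - u₀ := sub_pos.2 hx.1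
    have hfx : c < f x := hgt x hx
    have hfxA : f x ≤ A := by
      have := h2 x hxI
      have hle : (x - u₀) ^ 2 ≤ ε ^ 2 := by nlinarith [hx.2, hx.1]
      nlinarith
    have hq : f x ^ 2 - c ^ 2 ≤ M * (A + c) * (x - u₀) ^ 2 := by
      have h2x := h2 x hxI
      nlinarith
    have hqpos : 0 < f x ^ 2 - c ^ 2 := by nlinarith
    have hsq : Real.sqrt (f x ^ 2 - c ^ 2) ≤ S * (x - u₀) := by
      have : Real.sqrt (f x ^ 2 - c ^ 2) ≤ Real.sqrt (M * (A + c) * (x - u₀) ^ 2) :=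
        Real.sqrt_le_sqrt hq
      refine this.trans_eq ?_
      rw [Real.sqrt_mul (by positivity), Real.sqrt_sq hx0.le]
    have hsqpos : 0 < Real.sqrt (f x ^ 2 - c ^ 2) := Real.sqrt_pos.2 hqpos
    have hden : 0 < f x * Real.sqrt (f x ^ 2 - c ^ 2) := mul_pos (hc.trans hfx) hsqpos
    have hdenle : f x * Real.sqrt (f x ^ 2 - c ^ 2) ≤ A * S * (x - u₀) := by
      calc f x * Real.sqrt (f x ^ 2 - c ^ 2) ≤ A * (S * (x - u₀)) := by
            apply mul_le_mul hfxA hsq hsqpos.le hA0.le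
        _ = A * S * (x - u₀) := by ring
    have : c / (A * S * (x - u₀)) ≤ c / (f x * Real.sqrt (f x ^ 2 - c ^ 2)) :=
      div_le_div_of_nonneg_left hc.le hden hdenle
    calc k / (x - u₀) = c / (A * S * (x - u₀)) := by
          rw [hkdef]; field_simp
      _ ≤ g x := this
  -- the filter
  set l : Filter ℝ := 𝓝[(Set.uIcc u₀ (u₀ + ε)) \ {u₀}] u₀ with hldef
  have hIcc : (Set.uIcc u₀ (u₀ + ε)) = Icc u₀ (u₀ + ε) := uIcc_of_le (by linarith)
  have hmemIoo : ∀ᶠ x in l, x ∈ Ioo u₀ (u₀ + ε) := by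
    have h₁ : ∀ᶠ x in l, x ∈ (Set.uIcc u₀ (u₀ + ε)) \ {u₀} := self_mem_nhdsWithin
    have h₂ : ∀ᶠ x in l, x < u₀ + ε := by
      apply eventually_nhdsWithin_of_eventually_nhds
      exact Filter.Tendsto.eventually_lt_const (by linarith) tendsto_id
    filter_upwards [h₁, h₂] with x hx hx2
    rw [hIcc] at hx
    exact ⟨lt_of_le_of_ne hx.1.1 (Ne.symm hx.2), hx2⟩
  -- big O
  have hO : (fun x => (x - u₀)⁻¹) =O[l] g := by
    rw [Asymptotics.isBigO_iff]
    refine ⟨1 / k, ?_⟩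
    filter_upwards [hmemIoo] with x hx
    have hx0 : 0 < x - u₀ := sub_pos.2 hx.1
    have hgx : k / (x - u₀) ≤ g x := key x hx
    have hgpos : 0 < g x := lt_of_lt_of_le (by positivity) hgx
    rw [Real.norm_eq_abs, Real.norm_eq_abs, abs_of_nonneg (inv_nonneg.2 hx0.le),
      abs_of_nonneg hgpos.le]
    rw [div_le_iff₀ hx0] at hgx
    rw [inv_eq_one_div, div_le_iff₀ hx0]
    calc (1 : ℝ) = (1 / k) * k := by field_simp
      _ ≤ (1 / k) * (g x * (x - u₀)) := by
          apply mul_le_mul_of_nonneg_left hgx (by positivity)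
      _ = 1 / k * g x * (x - u₀) := by ring
  -- non-integrability via log
  have hne : u₀ ≠ u₀ + ε := by linarith
  have hnii : ¬ IntervalIntegrable g volume u₀ (u₀ + ε) := by
    have A' : ∀ᶠ x in l, HasDerivAt (fun x => Real.log (x - u₀)) (x - u₀)⁻¹ x := by
      filter_upwards [hmemIoo] with x hx
      simpa using ((hasDerivAt_id x).sub_const u₀).log (sub_ne_zero.2 (ne_of_gt hx.1))
    have hl_le : l ≤ 𝓝[≠] u₀ := nhdsWithin_mono _ (fun x hx => hx.2)
    have B' : Tendsto (fun x => ‖Real.log (x - u₀)‖) l atTop := by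
      refine Tendsto.mono_left ?_ hl_le
      refine tendsto_abs_atBot_atTop.comp (Real.tendsto_log_nhdsNE_zero.comp ?_)
      rw [← sub_self u₀]
      exact ((hasDerivAt_id u₀).sub_const u₀).tendsto_nhdsNE one_ne_zero
    exact not_intervalIntegrable_of_tendsto_norm_atTop_of_deriv_isBigO_within_sdiff_singleton
      hne (left_mem_uIcc) (A'.mono fun x hx => hx.differentiableAt) B'
      (hO.congr' (A'.mono fun x hx => hx.deriv.symm) EventuallyEq.rfl)
  apply hnii
  rw [intervalIntegrable_iff, uIoc_of_le (by linarith)]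
  exact (integrableOn_Ioc_iff_integrableOn_Ioo).mpr hint
end

section
/- Let $h : [0,L] \to [0,1]$ be smooth with $h(u_0) = 1$, $h'(u_0) = 0$, $h''(u_0) < 0$, and set $f(u) = \arcsin h(u)$ near $u_0$ (extended as $\pi - \arcsin h$ past $u_0$ so $h = \sin\circ f$ and $f$ is differentiable). Then $f'(u_0) = \sqrt{-h''(u_0)}$. -/
open Real

theorem stmt_19 (h f : ℝ → ℝ) (u₀ ε : ℝ) (hε : 0 < ε)
    (hsm : ContDiff ℝ 2 h) (hfsm : ContDiff ℝ 2 f)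
    (h1 : h u₀ = 1) (h2 : deriv h u₀ = 0) (h3 : iteratedDeriv 2 h u₀ < 0)
    (hrel : ∀ u ∈ Set.Ioo (u₀ - ε) (u₀ + ε), h u = Real.sin (f u))
    (hf0 : f u₀ = π / 2) (hf' : 0 ≤ deriv f u₀) :
    deriv f u₀ = Real.sqrt (-(iteratedDeriv 2 h u₀)) := by
  have hfd : Differentiable ℝ f := hfsm.differentiable two_ne_zero
  have hfd' : Differentiable ℝ (deriv f) :=
    (hfsm.iterate_deriv' 1 1).differentiable (by norm_num)
  have heq : h =ᶠ[nhds u₀] fun u => Real.sin (f u) := by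
    filter_upwards [Ioo_mem_nhds (show u₀ - ε < u₀ by linarith) (show u₀ < u₀ + ε by linarith)] with u hu
    exact hrel u hu
  have hderiv1 : ∀ u, deriv (fun u => Real.sin (f u)) u
      = Real.cos (f u) * deriv f u := by
    intro u
    exact ((hfd u).hasDerivAt.sin).deriv
  have hd : deriv h =ᶠ[nhds u₀] fun u => Real.cos (f u) * deriv f u := by
    filter_upwards [heq.deriv] with u hu
    rw [hu, hderiv1]
  have hder2 : HasDerivAt (fun u => Real.cos (f u) * deriv f u)
      ((-Real.sin (f u₀) * deriv f u₀) * deriv f u₀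
        + Real.cos (f u₀) * deriv (deriv f) u₀) u₀ :=
    ((hfd u₀).hasDerivAt.cos).mul (hfd' u₀).hasDerivAt
  have key : iteratedDeriv 2 h u₀ = -(deriv f u₀) ^ 2 := by
    rw [iteratedDeriv_succ, iteratedDeriv_one, hd.deriv_eq, hder2.deriv,
      hf0, Real.sin_pi_div_two, Real.cos_pi_div_two]
    ring
  rw [key, neg_neg, Real.sqrt_sq hf']
end
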